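/- arXiv:2401.02003 — 3 statements merged into one kernel-verified Lean document; each statement's English description precedes it below -/
import Mathlib

section
/- There exists a constant C > 0 such that for every δ with 0 < δ ≤ e^{−e}, the function f(t) = (log(log(1/t)))^{−1/4} satisfies ∫₀^δ ∫₀^δ |f(x) − f(y)|²/(x − y)² dx dy ≤ C / log(1/δ); that is, the squared homogeneous H^{1/2}((0,δ)) Gagliardo seminorm of f is at most C / log(1/δ). -/
open MeasureTheory Set intervalIntegral
open scoped ENNReal

noncomputable section

/-- The function `f(t) = (log(log(1/t)))^(-1/4)`. -/
def fGag (t : ℝ) : ℝ := Real.log (Real.log (1 / t)) ^ (-(1 / 4 : ℝ))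

namespace GagHelper

/-- The real-valued majorant in the `y` variable (for `y < x`). -/
def mR (x y : ℝ) : ℝ :=
  if y < x then
    (if 2 * y ≤ x then Real.log (x / y) ^ 2 / (4 * x ^ 2) else 1 / (16 * y ^ 2))
  else 0

/-- The full majorant on the product space. -/
def G (p : ℝ × ℝ) : ℝ≥0∞ :=
  ENNReal.ofReal (1 / Real.log (1 / p.1) ^ 2) * ENNReal.ofReal (mR p.1 p.2)

lemma measurable_mR : Measurable (fun p : ℝ × ℝ => mR p.1 p.2) := by
  unfold mR
  apply Measurable.ite (measurableSet_lt measurable_snd measurable_fst)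
  · apply Measurable.ite (measurableSet_le (measurable_snd.const_mul 2) measurable_fst)
    · exact ((Real.measurable_log.comp (measurable_fst.div measurable_snd)).pow_const 2).div
        ((measurable_fst.pow_const 2).const_mul 4)
    · exact measurable_const.div ((measurable_snd.pow_const 2).const_mul 16)
  · exact measurable_const

lemma measurable_G : Measurable G := by
  apply Measurable.mul (f := fun p : ℝ × ℝ => ENNReal.ofReal (1 / Real.log (1 / p.1) ^ 2))
    (g := fun p : ℝ × ℝ => ENNReal.ofReal (mR p.1 p.2))
  · exact (measurable_const.div
      ((Real.measurable_log.comp (measurable_const.div measurable_fst)).pow_const 2)).ennreal_ofReal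
  · exact measurable_mR.ennreal_ofReal

lemma mvt {a b : ℝ} (ha : 1 ≤ a) (hab : a ≤ b) :
    a ^ (-(1 / 4 : ℝ)) - b ^ (-(1 / 4 : ℝ)) ≤ (b - a) / 4 := by
  rcases eq_or_lt_of_le hab with rfl | hlt
  · simp
  have ha0 : (0:ℝ) < a := lt_of_lt_of_le one_pos ha
  obtain ⟨c, hc, hslope⟩ := exists_hasDerivAt_eq_slope
      (fun s => s ^ (-(1 / 4 : ℝ))) (fun s => (-(1 / 4 : ℝ)) * s ^ (-(1 / 4 : ℝ) - 1)) hlt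
      (fun s hs => (Real.continuousAt_rpow_const s _
        (Or.inl (ne_of_gt (lt_of_lt_of_le ha0 hs.1)))).continuousWithinAt)
      (fun s hs => Real.hasDerivAt_rpow_const (Or.inl (ne_of_gt (ha0.trans hs.1))))
  have hc1 : 1 ≤ c := le_of_lt (lt_of_le_of_lt ha hc.1)
  have hcpow : c ^ (-(1 / 4 : ℝ) - 1) ≤ 1 :=
    Real.rpow_le_one_of_one_le_of_nonpos hc1 (by norm_num)
  have hcpow0 : 0 ≤ c ^ (-(1 / 4 : ℝ) - 1) :=
    Real.rpow_nonneg (le_trans zero_le_one hc1) _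
  have hba : (0:ℝ) < b - a := sub_pos.mpr hlt
  have : a ^ (-(1 / 4 : ℝ)) - b ^ (-(1 / 4 : ℝ))
      = (1/4) * c ^ (-(1 / 4 : ℝ) - 1) * (b - a) := by
    have := hslope
    field_simp at this ⊢
    nlinarith [this]
  rw [this]
  nlinarith

lemma pointwise {x y : ℝ} (hy : 0 < y) (hyx : y < x) (hx : x ≤ Real.exp (-Real.exp 1)) :
    ENNReal.ofReal ((fGag x - fGag y) ^ 2 / (x - y) ^ 2) ≤ G (x, y) := by
  have hx0 : 0 < x := hy.trans hyx
  set u := Real.log (1 / x) with hu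
  set v := Real.log (1 / y) with hv
  have hue : Real.exp 1 ≤ u := by
    rw [hu, one_div, Real.log_inv]
    have : Real.log x ≤ -Real.exp 1 := by
      calc Real.log x ≤ Real.log (Real.exp (-Real.exp 1)) :=
            Real.log_le_log hx0 hx
        _ = -Real.exp 1 := Real.log_exp _
    linarith
  have hu0 : 0 < u := lt_of_lt_of_le (Real.exp_pos 1) hue
  have huv : u < v := by
    rw [hu, hv]
    apply Real.log_lt_log (by positivity)
    exact one_div_lt_one_div_of_lt hy hyx
  set a := Real.log u with hadef
  set b := Real.log v with hbdef
  have ha1 : 1 ≤ a := by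
    rw [hadef]
    calc (1:ℝ) = Real.log (Real.exp 1) := (Real.log_exp 1).symm
      _ ≤ Real.log u := Real.log_le_log (Real.exp_pos 1) hue
  have hab : a ≤ b := Real.log_le_log hu0 huv.le
  have hfd : fGag x - fGag y = a ^ (-(1 / 4 : ℝ)) - b ^ (-(1 / 4 : ℝ)) := rfl
  have hd0 : 0 ≤ fGag x - fGag y := by
    rw [hfd]
    have := Real.rpow_le_rpow_of_nonpos (lt_of_lt_of_le one_pos ha1) hab
      (by norm_num : (-(1/4):ℝ) ≤ 0)
    linarith
  have hlogxy : v - u = Real.log (x / y) := by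
    rw [hu, hv, Real.log_div (ne_of_gt hx0) (ne_of_gt hy)]
    rw [one_div, one_div, Real.log_inv, Real.log_inv]; ring
  have hba : b - a ≤ Real.log (x / y) / u := by
    have h1 : b - a = Real.log (v / u) := by
      rw [hadef, hbdef, Real.log_div (ne_of_gt (hu0.trans huv)) (ne_of_gt hu0)]
    have h2 : Real.log (v / u) ≤ v / u - 1 :=
      Real.log_le_sub_one_of_pos (div_pos (hu0.trans huv) hu0)
    have h3 : v / u - 1 = (v - u) / u := by field_simp
    rw [h1, ← hlogxy, ← h3]
    linarith
  have hd1 : fGag x - fGag y ≤ Real.log (x / y) / (4 * u) := by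
    rw [hfd]
    calc a ^ (-(1 / 4 : ℝ)) - b ^ (-(1 / 4 : ℝ)) ≤ (b - a) / 4 := mvt ha1 hab
      _ ≤ (Real.log (x / y) / u) / 4 := by linarith
      _ = Real.log (x / y) / (4 * u) := by ring
  have hlxy0 : 0 ≤ Real.log (x / y) := by
    apply Real.log_nonneg
    rw [le_div_iff₀ hy]; linarith
  have hsq : (fGag x - fGag y) ^ 2 ≤ Real.log (x / y) ^ 2 / (16 * u ^ 2) := by
    have h1 := pow_le_pow_left₀ hd0 hd1 2
    have h2 : (Real.log (x / y) / (4 * u)) ^ 2 = Real.log (x / y) ^ 2 / (16 * u ^ 2) := by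
      rw [div_pow]; congr 1; ring
    rw [h2] at h1; exact h1
  by_cases h2y : 2 * y ≤ x
  · have hGval : G (x, y)
        = ENNReal.ofReal ((1 / u ^ 2) * (Real.log (x / y) ^ 2 / (4 * x ^ 2))) := by
      rw [G, mR]
      simp only [if_pos hyx, if_pos h2y]
      rw [← ENNReal.ofReal_mul (by positivity)]
    rw [hGval]
    apply ENNReal.ofReal_le_ofReal
    have hxy2 : x ^ 2 / 4 ≤ (x - y) ^ 2 := by nlinarith
    calc (fGag x - fGag y) ^ 2 / (x - y) ^ 2
        ≤ (Real.log (x / y) ^ 2 / (16 * u ^ 2)) / (x ^ 2 / 4) :=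
          div_le_div₀ (by positivity) hsq (by positivity) hxy2
      _ = (1 / u ^ 2) * (Real.log (x / y) ^ 2 / (4 * x ^ 2)) := by
          field_simp; ring
  · have hGval : G (x, y) = ENNReal.ofReal ((1 / u ^ 2) * (1 / (16 * y ^ 2))) := by
      rw [G, mR]
      simp only [if_pos hyx, if_neg h2y]
      rw [← ENNReal.ofReal_mul (by positivity)]
    rw [hGval]
    apply ENNReal.ofReal_le_ofReal
    have hxy0 : (0:ℝ) < x - y := sub_pos.mpr hyx
    have hd1' : fGag x - fGag y ≤ ((x - y) / y) / (4 * u) := by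
      refine hd1.trans ?_
      have : Real.log (x / y) ≤ (x - y) / y := by
        have := Real.log_le_sub_one_of_pos (div_pos hx0 hy)
        have h3 : x / y - 1 = (x - y) / y := by field_simp
        linarith
      gcongr
    have hsq' : (fGag x - fGag y) ^ 2 ≤ ((x - y) / y) ^ 2 / (16 * u ^ 2) := by
      have h1 := pow_le_pow_left₀ hd0 hd1' 2
      have h2 : (((x - y) / y) / (4 * u)) ^ 2 = ((x - y) / y) ^ 2 / (16 * u ^ 2) := by
        rw [div_pow]; congr 1; ring
      rw [h2] at h1; exact h1
    calc (fGag x - fGag y) ^ 2 / (x - y) ^ 2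
        ≤ (((x - y) / y) ^ 2 / (16 * u ^ 2)) / (x - y) ^ 2 :=
          (div_le_div_iff_of_pos_right (by positivity)).mpr hsq'
      _ = (1 / u ^ 2) * (1 / (16 * y ^ 2)) := by
          field_simp

lemma lint_rpow_half {c : ℝ} (hc : 0 < c) :
    ∫⁻ y in Ioc (0:ℝ) c, ENNReal.ofReal (y ^ (-(1/2) : ℝ))
      = ENNReal.ofReal (2 * c ^ ((1:ℝ)/2)) := by
  have hint : IntegrableOn (fun y : ℝ => y ^ (-(1/2) : ℝ)) (Ioc 0 c) :=
    (intervalIntegrable_iff_integrableOn_Ioc_of_le hc.le).mp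
      (intervalIntegrable_rpow' (by norm_num))
  rw [← ofReal_integral_eq_lintegral_ofReal hint
      ((ae_restrict_iff' measurableSet_Ioc).2 (ae_of_all _
        (fun y hy => Real.rpow_nonneg hy.1.le _)))]
  congr 1
  rw [← intervalIntegral.integral_of_le hc.le, integral_rpow (Or.inl (by norm_num))]
  rw [Real.zero_rpow (by norm_num)]
  norm_num
  ring

lemma lint_rpow_neg_two {c : ℝ} (hc : 0 < c) :
    ∫⁻ y in Ioi c, ENNReal.ofReal (y ^ (-(2:ℝ) : ℝ)) = ENNReal.ofReal (c⁻¹) := by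
  rw [← ofReal_integral_eq_lintegral_ofReal
      (integrableOn_Ioi_rpow_of_lt (by norm_num) hc)
      ((ae_restrict_iff' measurableSet_Ioi).2 (ae_of_all _
        (fun y hy => Real.rpow_nonneg (hc.trans hy).le _)))]
  congr 1
  rw [integral_Ioi_rpow_of_lt (by norm_num) hc]
  norm_num
  rw [Real.rpow_neg_one]

lemma inner_bound {x : ℝ} (hx : 0 < x) (δ : ℝ) :
    ∫⁻ y in Ioo (0:ℝ) δ, ENNReal.ofReal (mR x y) ≤ ENNReal.ofReal (9 / x) := by
  have hx2 : (0:ℝ) < x / 2 := half_pos hx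
  have hfar : ∫⁻ y in Ioc (0:ℝ) (x/2), ENNReal.ofReal (mR x y)
      ≤ ENNReal.ofReal (8 / x) := by
    have hptw : ∀ y ∈ Ioc (0:ℝ) (x/2),
        ENNReal.ofReal (mR x y)
          ≤ ENNReal.ofReal (4 * x ^ ((1:ℝ)/2) / x ^ 2) * ENNReal.ofReal (y ^ (-(1/2) : ℝ)) := by
      intro y hy
      obtain ⟨hy0, hy2⟩ := hy
      have hyx : y < x := lt_of_le_of_lt hy2 (half_lt_self hx)
      have h2y : 2 * y ≤ x := by linarith
      have ht : (0:ℝ) < x / y := div_pos hx hy0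
      have ht1 : (1:ℝ) ≤ x / y := by
        rw [le_div_iff₀ hy0]; linarith
      have hlog0 : 0 ≤ Real.log (x / y) := Real.log_nonneg ht1
      have hlog : Real.log (x / y) ≤ 4 * (x / y) ^ ((1:ℝ)/4) := by
        have h1 : Real.log ((x/y) ^ ((1:ℝ)/4)) = (1/4) * Real.log (x/y) :=
          Real.log_rpow ht _
        have h2 : Real.log ((x/y) ^ ((1:ℝ)/4)) ≤ (x/y) ^ ((1:ℝ)/4) - 1 :=
          Real.log_le_sub_one_of_pos (Real.rpow_pos_of_pos ht _)
        nlinarith [Real.rpow_pos_of_pos ht ((1:ℝ)/4)]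
      have hsq : Real.log (x / y) ^ 2 ≤ 16 * (x / y) ^ ((1:ℝ)/2) := by
        have h1 := pow_le_pow_left₀ hlog0 hlog 2
        have h2 : ((x/y) ^ ((1:ℝ)/4)) ^ 2 = (x/y) ^ ((1:ℝ)/2) := by
          rw [← Real.rpow_natCast ((x/y) ^ ((1:ℝ)/4)) 2, ← Real.rpow_mul ht.le]
          norm_num
        calc Real.log (x / y) ^ 2 ≤ (4 * (x/y) ^ ((1:ℝ)/4)) ^ 2 := h1
          _ = 16 * ((x/y) ^ ((1:ℝ)/4)) ^ 2 := by ring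
          _ = 16 * (x/y) ^ ((1:ℝ)/2) := by rw [h2]
      have hsplit : (x / y) ^ ((1:ℝ)/2) = x ^ ((1:ℝ)/2) * y ^ (-(1/2) : ℝ) := by
        rw [Real.div_rpow hx.le hy0.le, Real.rpow_neg hy0.le, div_eq_mul_inv]
      have hmr : mR x y ≤ 4 * x ^ ((1:ℝ)/2) / x ^ 2 * y ^ (-(1/2) : ℝ) := by
        rw [mR, if_pos hyx, if_pos h2y]
        calc Real.log (x / y) ^ 2 / (4 * x ^ 2)
            ≤ (16 * (x / y) ^ ((1:ℝ)/2)) / (4 * x ^ 2) := by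
              apply div_le_div_of_nonneg_right hsq (by positivity) |>.trans_eq rfl
          _ = 4 * x ^ ((1:ℝ)/2) / x ^ 2 * y ^ (-(1/2) : ℝ) := by
              rw [hsplit]; field_simp; ring
      rw [← ENNReal.ofReal_mul (by positivity)]
      exact ENNReal.ofReal_le_ofReal hmr
    calc ∫⁻ y in Ioc (0:ℝ) (x/2), ENNReal.ofReal (mR x y)
        ≤ ∫⁻ y in Ioc (0:ℝ) (x/2),
            ENNReal.ofReal (4 * x ^ ((1:ℝ)/2) / x ^ 2) * ENNReal.ofReal (y ^ (-(1/2) : ℝ)) :=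
          setLIntegral_mono' measurableSet_Ioc hptw
      _ = ENNReal.ofReal (4 * x ^ ((1:ℝ)/2) / x ^ 2)
            * ENNReal.ofReal (2 * (x/2) ^ ((1:ℝ)/2)) := by
          rw [lintegral_const_mul' _ _ ENNReal.ofReal_ne_top, lint_rpow_half hx2]
      _ ≤ ENNReal.ofReal (8 / x) := by
          rw [← ENNReal.ofReal_mul (by positivity)]
          apply ENNReal.ofReal_le_ofReal
          have h1 : (x/2) ^ ((1:ℝ)/2) ≤ x ^ ((1:ℝ)/2) :=
            Real.rpow_le_rpow hx2.le (half_le_self hx.le) (by norm_num)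
          have h2 : x ^ ((1:ℝ)/2) * x ^ ((1:ℝ)/2) = x := by
            rw [← Real.rpow_add hx]; norm_num
          calc 4 * x ^ ((1:ℝ)/2) / x ^ 2 * (2 * (x/2) ^ ((1:ℝ)/2))
              ≤ 4 * x ^ ((1:ℝ)/2) / x ^ 2 * (2 * x ^ ((1:ℝ)/2)) := by
                have h0 : 0 ≤ 4 * x ^ ((1:ℝ)/2) / x ^ 2 := by positivity
                nlinarith [Real.rpow_nonneg hx2.le ((1:ℝ)/2)]
            _ = 8 * (x ^ ((1:ℝ)/2) * x ^ ((1:ℝ)/2)) / x ^ 2 := by ring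
            _ = 8 / x := by rw [h2]; field_simp
  have hnear : ∫⁻ y in Ioi (x/2), ENNReal.ofReal (mR x y)
      ≤ ENNReal.ofReal (1 / (8 * x)) := by
    have hptw : ∀ y ∈ Ioi (x/2),
        ENNReal.ofReal (mR x y)
          ≤ ENNReal.ofReal (1/16 : ℝ) * ENNReal.ofReal (y ^ (-(2:ℝ))) := by
      intro y hy
      have hy0 : 0 < y := hx2.trans hy
      have hy2 : y ^ (-(2:ℝ)) = 1 / y ^ 2 := by
        rw [show (-(2:ℝ)) = ((-2 : ℤ) : ℝ) by norm_num, Real.rpow_intCast]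
        simp [zpow_ofNat]
      rw [← ENNReal.ofReal_mul (by norm_num)]
      apply ENNReal.ofReal_le_ofReal
      rw [mR, hy2]
      split_ifs with h1 h2
      · exfalso; simp only [mem_Ioi] at hy; linarith
      · exact le_of_eq (by ring)
      · positivity
    calc ∫⁻ y in Ioi (x/2), ENNReal.ofReal (mR x y)
        ≤ ∫⁻ y in Ioi (x/2), ENNReal.ofReal (1/16 : ℝ) * ENNReal.ofReal (y ^ (-(2:ℝ))) :=
          setLIntegral_mono' measurableSet_Ioi hptw
      _ = ENNReal.ofReal (1/16 : ℝ) * ENNReal.ofReal ((x/2)⁻¹) := by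
          rw [lintegral_const_mul' _ _ ENNReal.ofReal_ne_top, lint_rpow_neg_two hx2]
      _ ≤ ENNReal.ofReal (1 / (8 * x)) := by
          rw [← ENNReal.ofReal_mul (by norm_num)]
          apply ENNReal.ofReal_le_ofReal
          rw [inv_div]
          exact le_of_eq (by ring)
  calc ∫⁻ y in Ioo (0:ℝ) δ, ENNReal.ofReal (mR x y)
      ≤ ∫⁻ y in Ioi (0:ℝ), ENNReal.ofReal (mR x y) :=
        lintegral_mono_set Ioo_subset_Ioi_self
    _ = (∫⁻ y in Ioc (0:ℝ) (x/2), ENNReal.ofReal (mR x y))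
        + ∫⁻ y in Ioi (x/2), ENNReal.ofReal (mR x y) := by
        rw [← lintegral_union measurableSet_Ioi (Ioc_disjoint_Ioi le_rfl),
          Ioc_union_Ioi_eq_Ioi hx2.le]
    _ ≤ ENNReal.ofReal (8 / x) + ENNReal.ofReal (1 / (8 * x)) := add_le_add hfar hnear
    _ = ENNReal.ofReal (8 / x + 1 / (8 * x)) := by
        rw [ENNReal.ofReal_add (by positivity) (by positivity)]
    _ ≤ ENNReal.ofReal (9 / x) := by
        apply ENNReal.ofReal_le_ofReal
        rw [div_add_div _ _ (by positivity) (by positivity),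
          div_le_div_iff₀ (by positivity) (by positivity)]
        nlinarith

lemma outer {δ : ℝ} (hδ0 : 0 < δ) (hδe : δ ≤ Real.exp (-Real.exp 1)) :
    ∫⁻ x in Ioo (0:ℝ) δ, ENNReal.ofReal (9 / (x * Real.log (1/x) ^ 2))
      ≤ ENNReal.ofReal (9 / Real.log (1 / δ)) := by
  set L := Real.log (1/δ) with hLdef
  have hLd : L = -Real.log δ := by rw [hLdef, one_div, Real.log_inv]
  have hL : Real.exp 1 ≤ L := by
    have : Real.log δ ≤ -Real.exp 1 := by
      calc Real.log δ ≤ Real.log (Real.exp (-Real.exp 1)) := Real.log_le_log hδ0 hδe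
        _ = -Real.exp 1 := Real.log_exp _
    linarith [hLd]
  have hL0 : 0 < L := lt_of_lt_of_le (Real.exp_pos 1) hL
  have himg : Ioo (0:ℝ) δ = (fun u : ℝ => Real.exp (-u)) '' Ioi L := by
    ext z
    simp only [mem_Ioo, mem_image, mem_Ioi]
    constructor
    · rintro ⟨hz0, hzδ⟩
      refine ⟨-Real.log z, ?_, by rw [neg_neg, Real.exp_log hz0]⟩
      have := Real.log_lt_log hz0 hzδ
      linarith
    · rintro ⟨u, hu, rfl⟩
      refine ⟨Real.exp_pos _, ?_⟩
      have h1 : Real.exp (-u) < Real.exp (-L) := Real.exp_lt_exp.mpr (by linarith)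
      have h2 : Real.exp (-L) = δ := by rw [hLd, neg_neg, Real.exp_log hδ0]
      linarith
  have hderiv : ∀ u : ℝ, HasDerivAt (fun u : ℝ => Real.exp (-u)) (-Real.exp (-u)) u := by
    intro u
    exact ((Real.hasDerivAt_exp (-u)).comp u (hasDerivAt_neg u)).congr_deriv (by ring)
  have hinj : InjOn (fun u : ℝ => Real.exp (-u)) (Ioi L) := by
    intro a _ b _ h
    simpa using Real.exp_eq_exp.mp h
  rw [himg, lintegral_image_eq_lintegral_abs_det_fderiv_mul volume measurableSet_Ioi
    (fun u _ => ((hderiv u).hasDerivWithinAt).hasFDerivWithinAt) hinj]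
  simp only [ContinuousLinearMap.det_toSpanSingleton]
  have hcong : ∀ u ∈ Ioi L,
      ENNReal.ofReal |(-Real.exp (-u))|
        * ENNReal.ofReal (9 / (Real.exp (-u) * Real.log (1 / Real.exp (-u)) ^ 2))
      = ENNReal.ofReal (9:ℝ) * ENNReal.ofReal (u ^ (-(2:ℝ))) := by
    intro u hu
    have hu0 : 0 < u := hL0.trans hu
    have hloge : Real.log (1 / Real.exp (-u)) = u := by
      rw [one_div, Real.exp_neg, inv_inv, Real.log_exp]
    have hupow : u ^ (-(2:ℝ)) = 1 / u ^ 2 := by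
      rw [show (-(2:ℝ)) = ((-2 : ℤ) : ℝ) by norm_num, Real.rpow_intCast]
      simp [zpow_ofNat]
    rw [hloge, abs_neg, abs_of_pos (Real.exp_pos _), hupow,
      ← ENNReal.ofReal_mul (Real.exp_pos _).le, ← ENNReal.ofReal_mul (by norm_num)]
    congr 1
    have he : Real.exp (-u) ≠ 0 := (Real.exp_pos _).ne'
    field_simp
  rw [setLIntegral_congr_fun measurableSet_Ioi hcong,
    lintegral_const_mul' _ _ ENNReal.ofReal_ne_top, lint_rpow_neg_two hL0,
    ← ENNReal.ofReal_mul (by norm_num)]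
  apply ENNReal.ofReal_le_ofReal
  exact le_of_eq (by rw [div_eq_mul_inv])

lemma iterated_bound {δ : ℝ} (hδ0 : 0 < δ) (hδe : δ ≤ Real.exp (-Real.exp 1)) :
    ∫⁻ a in Ioo (0:ℝ) δ, ∫⁻ b in Ioo (0:ℝ) δ, G (a, b)
      ≤ ENNReal.ofReal (9 / Real.log (1 / δ)) := by
  calc ∫⁻ a in Ioo (0:ℝ) δ, ∫⁻ b in Ioo (0:ℝ) δ, G (a, b)
      ≤ ∫⁻ a in Ioo (0:ℝ) δ, ENNReal.ofReal (9 / (a * Real.log (1/a) ^ 2)) := by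
        apply setLIntegral_mono' measurableSet_Ioo
        intro x hx
        calc ∫⁻ b in Ioo (0:ℝ) δ, G (x, b)
            = ENNReal.ofReal (1 / Real.log (1/x) ^ 2)
              * ∫⁻ b in Ioo (0:ℝ) δ, ENNReal.ofReal (mR x b) := by
              simp only [G]
              rw [lintegral_const_mul' _ _ ENNReal.ofReal_ne_top]
          _ ≤ ENNReal.ofReal (1 / Real.log (1/x) ^ 2) * ENNReal.ofReal (9 / x) :=
              mul_le_mul_right (inner_bound hx.1 δ) _
          _ = ENNReal.ofReal (9 / (x * Real.log (1/x) ^ 2)) := by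
              rw [← ENNReal.ofReal_mul (by positivity)]
              congr 1
              ring
    _ ≤ ENNReal.ofReal (9 / Real.log (1 / δ)) := outer hδ0 hδe

end GagHelper

open GagHelper in
/-- There is a constant `C > 0` such that for every `0 < δ ≤ e^{-e}`, the squared homogeneous
`H^{1/2}((0,δ))` Gagliardo seminorm of `f(t) = (log(log(1/t)))^(-1/4)`, i.e. the double integral
`∬_{(0,δ)×(0,δ)} |f(x) - f(y)|²/(x-y)² dx dy`, is at most `C / log(1/δ)`. -/
theorem stmt0 :
    ∃ C : ℝ, 0 < C ∧
      ∀ δ : ℝ, 0 < δ → δ ≤ Real.exp (-Real.exp 1) →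
        (∫⁻ p in (Ioo (0 : ℝ) δ ×ˢ Ioo (0 : ℝ) δ),
            ENNReal.ofReal ((fGag p.1 - fGag p.2) ^ 2 / (p.1 - p.2) ^ 2))
          ≤ ENNReal.ofReal (C / Real.log (1 / δ)) := by
  refine ⟨18, by norm_num, fun δ hδ0 hδe => ?_⟩
  have key : ∀ p : ℝ × ℝ, p ∈ Ioo (0 : ℝ) δ ×ˢ Ioo (0 : ℝ) δ →
      ENNReal.ofReal ((fGag p.1 - fGag p.2) ^ 2 / (p.1 - p.2) ^ 2)
        ≤ G p + G p.swap := by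
    rintro ⟨x, y⟩ ⟨hx, hy⟩
    rcases lt_trichotomy y x with h | h | h
    · exact le_add_right (pointwise hy.1 h (le_of_lt (lt_of_lt_of_le hx.2 hδe)))
    · subst h
      simp
    · have hpt := pointwise hx.1 h (le_of_lt (lt_of_lt_of_le hy.2 hδe))
      have e1 : (fGag x - fGag y) ^ 2 = (fGag y - fGag x) ^ 2 := by ring
      have e2 : (x - y) ^ 2 = (y - x) ^ 2 := by ring
      simp only [Prod.fst, Prod.snd, Prod.swap_prod_mk]
      rw [e1, e2]
      exact le_add_left hpt
  have hGswap_meas : Measurable (fun p : ℝ × ℝ => G p.swap) :=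
    measurable_G.comp measurable_swap
  calc ∫⁻ p in (Ioo (0 : ℝ) δ ×ˢ Ioo (0 : ℝ) δ),
        ENNReal.ofReal ((fGag p.1 - fGag p.2) ^ 2 / (p.1 - p.2) ^ 2)
      ≤ ∫⁻ p in (Ioo (0 : ℝ) δ ×ˢ Ioo (0 : ℝ) δ), (G p + G p.swap) :=
        setLIntegral_mono' (measurableSet_Ioo.prod measurableSet_Ioo) key
    _ = (∫⁻ p in (Ioo (0 : ℝ) δ ×ˢ Ioo (0 : ℝ) δ), G p)
        + ∫⁻ p in (Ioo (0 : ℝ) δ ×ˢ Ioo (0 : ℝ) δ), G p.swap :=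
        lintegral_add_left measurable_G _
    _ ≤ ENNReal.ofReal (9 / Real.log (1 / δ)) + ENNReal.ofReal (9 / Real.log (1 / δ)) := by
        apply add_le_add
        · rw [Measure.volume_eq_prod, ← Measure.prod_restrict,
            lintegral_prod _ measurable_G.aemeasurable]
          exact iterated_bound hδ0 hδe
        · rw [Measure.volume_eq_prod, ← Measure.prod_restrict,
            lintegral_prod_symm _ hGswap_meas.aemeasurable]
          simp only [Prod.swap_prod_mk]
          exact iterated_bound hδ0 hδe
    _ = ENNReal.ofReal (18 / Real.log (1 / δ)) := by
        have hL : Real.exp 1 ≤ Real.log (1 / δ) := by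
          rw [one_div, Real.log_inv]
          have h := Real.log_le_log hδ0 hδe
          rw [Real.log_exp] at h
          linarith
        have hL0 : (0:ℝ) < Real.log (1 / δ) := lt_of_lt_of_le (Real.exp_pos 1) hL
        have hnn : (0:ℝ) ≤ 9 / Real.log (1 / δ) := le_of_lt (div_pos (by norm_num) hL0)
        rw [← ENNReal.ofReal_add hnn hnn]
        congr 1
        ring
end
end

section
/- There exists a constant C > 0 such that for every δ with 0 < δ ≤ e^{−e}, the near-diagonal part of the Gagliardo integral of f(t) = (log(log(1/t)))^{−1/4} satisfies ∬_{{(x,y) : 0 < x ≤ y ≤ 2x and y ≤ δ}} |f(x) − f(y)|²/(x − y)² dx dy ≤ C / log(1/δ). -/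
open MeasureTheory Set
open scoped ENNReal

noncomputable section

lemma log_one_div_ge {t δ : ℝ} (ht : 0 < t) (htδ : t ≤ δ) (hδ : δ ≤ Real.exp (-Real.exp 1)) :
    Real.exp 1 ≤ Real.log (1 / t) := by
  have h1 : Real.log t ≤ -Real.exp 1 := by
    calc Real.log t ≤ Real.log (Real.exp (-Real.exp 1)) :=
          Real.log_le_log ht (htδ.trans hδ)
      _ = -Real.exp 1 := Real.log_exp _
  rw [one_div, Real.log_inv]
  linarith

lemma loglog_ge_one {t δ : ℝ} (ht : 0 < t) (htδ : t ≤ δ) (hδ : δ ≤ Real.exp (-Real.exp 1)) :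
    1 ≤ Real.log (Real.log (1 / t)) := by
  have := log_one_div_ge ht htδ hδ
  calc (1:ℝ) = Real.log (Real.exp 1) := (Real.log_exp 1).symm
    _ ≤ Real.log (Real.log (1 / t)) := Real.log_le_log (Real.exp_pos 1) this

lemma hasDerivAt_log_one_div {t : ℝ} (h0 : 0 < t) :
    HasDerivAt (fun s : ℝ => Real.log (1 / s)) (-t⁻¹) t := by
  have h1 : HasDerivAt (fun s : ℝ => 1 / s) (-(t ^ 2)⁻¹) t := by
    simpa only [one_div] using hasDerivAt_inv h0.ne'
  have h2 := h1.log (by positivity : 1 / t ≠ 0)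
  convert h2 using 1
  field_simp

lemma fGag_hasDerivAt {t : ℝ} (h0 : 0 < t) (he : Real.exp 1 ≤ Real.log (1 / t)) :
    HasDerivAt fGag
      (-t⁻¹ / Real.log (1 / t) * (-(1 / 4)) *
        Real.log (Real.log (1 / t)) ^ (-(1 / 4 : ℝ) - 1)) t := by
  have hlt : (0:ℝ) < Real.log (1 / t) := lt_of_lt_of_le (Real.exp_pos 1) he
  have h3 := (hasDerivAt_log_one_div h0).log hlt.ne'
  have hll : (1:ℝ) ≤ Real.log (Real.log (1 / t)) := by
    calc (1:ℝ) = Real.log (Real.exp 1) := (Real.log_exp 1).symm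
      _ ≤ _ := Real.log_le_log (Real.exp_pos 1) he
  have h4 := h3.rpow_const (p := -(1/4)) (Or.inl (by linarith))
  exact h4
lemma fGag_lip {x y δ : ℝ} (hx : 0 < x) (hxy : x ≤ y) (hyδ : y ≤ δ)
    (hδ : δ ≤ Real.exp (-Real.exp 1)) :
    |fGag y - fGag x| ≤ (4 * x * Real.log (1 / y))⁻¹ * (y - x) := by
  have hy0 : 0 < y := lt_of_lt_of_le hx hxy
  have hLy : Real.exp 1 ≤ Real.log (1 / y) := log_one_div_ge hy0 hyδ hδ
  have hLy0 : (0:ℝ) < Real.log (1 / y) := lt_of_lt_of_le (Real.exp_pos 1) hLy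
  set D : ℝ → ℝ := fun t =>
    -t⁻¹ / Real.log (1 / t) * (-(1 / 4)) * Real.log (Real.log (1 / t)) ^ (-(1 / 4 : ℝ) - 1)
    with hD
  have key : ∀ t ∈ Icc x y, HasDerivWithinAt fGag (D t) (Icc x y) t := by
    intro t ht
    have ht0 : 0 < t := lt_of_lt_of_le hx ht.1
    exact (fGag_hasDerivAt ht0
      (log_one_div_ge ht0 (ht.2.trans hyδ) hδ)).hasDerivWithinAt
  have bound : ∀ t ∈ Icc x y, ‖D t‖ ≤ (4 * x * Real.log (1 / y))⁻¹ := by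
    intro t ht
    have ht0 : 0 < t := lt_of_lt_of_le hx ht.1
    have hLt : Real.exp 1 ≤ Real.log (1 / t) := log_one_div_ge ht0 (ht.2.trans hyδ) hδ
    have hLt0 : (0:ℝ) < Real.log (1 / t) := lt_of_lt_of_le (Real.exp_pos 1) hLt
    have hllt : (1:ℝ) ≤ Real.log (Real.log (1 / t)) := by
      calc (1:ℝ) = Real.log (Real.exp 1) := (Real.log_exp 1).symm
        _ ≤ _ := Real.log_le_log (Real.exp_pos 1) hLt
    have hA1 : Real.log (Real.log (1 / t)) ^ (-(1 / 4 : ℝ) - 1) ≤ 1 :=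
      Real.rpow_le_one_of_one_le_of_nonpos hllt (by norm_num)
    have hA0 : 0 < Real.log (Real.log (1 / t)) ^ (-(1 / 4 : ℝ) - 1) :=
      Real.rpow_pos_of_pos (by linarith) _
    have hDeq : D t = 1/4 * (t⁻¹ * (Real.log (1 / t))⁻¹ *
        Real.log (Real.log (1 / t)) ^ (-(1 / 4 : ℝ) - 1)) := by
      rw [hD]; ring
    rw [Real.norm_eq_abs, hDeq, abs_of_nonneg (by positivity)]
    have hLty : Real.log (1 / y) ≤ Real.log (1 / t) := by
      apply Real.log_le_log (by positivity)
      exact one_div_le_one_div_of_le ht0 ht.2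
    have h1 : t⁻¹ ≤ x⁻¹ := inv_anti₀ hx ht.1
    have h2 : (Real.log (1 / t))⁻¹ ≤ (Real.log (1 / y))⁻¹ :=
      inv_anti₀ hLy0 hLty
    have step : t⁻¹ * (Real.log (1 / t))⁻¹ *
        Real.log (Real.log (1 / t)) ^ (-(1 / 4 : ℝ) - 1)
        ≤ x⁻¹ * (Real.log (1 / y))⁻¹ * 1 := by
      apply mul_le_mul (mul_le_mul h1 h2 (by positivity) (by positivity)) hA1
        (le_of_lt hA0) (by positivity)
    calc 1/4 * (t⁻¹ * (Real.log (1 / t))⁻¹ *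
          Real.log (Real.log (1 / t)) ^ (-(1 / 4 : ℝ) - 1))
        ≤ 1/4 * (x⁻¹ * (Real.log (1 / y))⁻¹ * 1) := by linarith
      _ = (4 * x * Real.log (1 / y))⁻¹ := by field_simp
  have := (convex_Icc x y).norm_image_sub_le_of_norm_hasDerivWithin_le key bound
    (left_mem_Icc.2 hxy) (right_mem_Icc.2 hxy)
  rw [Real.norm_eq_abs, Real.norm_eq_abs] at this
  calc |fGag y - fGag x| ≤ (4 * x * Real.log (1 / y))⁻¹ * |y - x| := this
    _ = (4 * x * Real.log (1 / y))⁻¹ * (y - x) := by rw [abs_of_nonneg (by linarith)]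

lemma integrand_le {x y δ : ℝ} (hδ : δ ≤ Real.exp (-Real.exp 1)) (hx : 0 < x)
    (hxy : x ≤ y) (hyδ : y ≤ δ) :
    (fGag x - fGag y) ^ 2 / (x - y) ^ 2 ≤ ((4 * x * Real.log (1 / y)) ^ 2)⁻¹ := by
  have hy0 : 0 < y := lt_of_lt_of_le hx hxy
  have hLy0 : (0:ℝ) < Real.log (1 / y) :=
    lt_of_lt_of_le (Real.exp_pos 1) (log_one_div_ge hy0 hyδ hδ)
  rcases eq_or_lt_of_le hxy with h | h
  · subst h; simp; positivity
  · have hlip := fGag_lip hx hxy hyδ hδ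
    have hxy2 : (0:ℝ) < (x - y) ^ 2 := by
      have : x - y ≠ 0 := by linarith
      positivity
    rw [div_le_iff₀ hxy2]
    have habs : (fGag x - fGag y) ^ 2 ≤ ((4 * x * Real.log (1 / y))⁻¹ * (y - x)) ^ 2 := by
      have h1 : |fGag x - fGag y| ≤ (4 * x * Real.log (1 / y))⁻¹ * (y - x) := by
        rw [abs_sub_comm]; exact hlip
      calc (fGag x - fGag y) ^ 2 = |fGag x - fGag y| ^ 2 := (sq_abs _).symm
        _ ≤ ((4 * x * Real.log (1 / y))⁻¹ * (y - x)) ^ 2 :=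
            pow_le_pow_left₀ (abs_nonneg _) h1 2
    calc (fGag x - fGag y) ^ 2 ≤ ((4 * x * Real.log (1 / y))⁻¹ * (y - x)) ^ 2 := habs
      _ = ((4 * x * Real.log (1 / y)) ^ 2)⁻¹ * (x - y) ^ 2 := by
          rw [mul_pow, ← inv_pow]; ring_nf
lemma inner_int {y u : ℝ} (hy : 0 < y) (hu : 0 < u) :
    ∫⁻ x in Icc (y/2) y, ENNReal.ofReal (((4 * x * u) ^ 2)⁻¹)
      = ENNReal.ofReal ((16 * y * u ^ 2)⁻¹) := by
  have hle : y/2 ≤ y := by linarith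
  have hcont : ContinuousOn (fun x : ℝ => ((4 * x * u) ^ 2)⁻¹) (Icc (y/2) y) := by
    apply ContinuousOn.inv₀
    · fun_prop
    · intro x hx
      have hx0 : 0 < x := lt_of_lt_of_le (by linarith) hx.1
      positivity
  have hint : IntegrableOn (fun x : ℝ => ((4 * x * u) ^ 2)⁻¹) (Icc (y/2) y) :=
    hcont.integrableOn_compact isCompact_Icc
  have key : ∫ x in (y/2)..y, ((4 * x * u) ^ 2)⁻¹ = (16 * y * u ^ 2)⁻¹ := by
    have hderiv : ∀ x ∈ Set.uIcc (y/2) y,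
        HasDerivAt (fun x : ℝ => -(16 * u ^ 2)⁻¹ * x⁻¹) (((4 * x * u) ^ 2)⁻¹) x := by
      intro x hx
      rw [Set.uIcc_of_le hle] at hx
      have hx0 : 0 < x := lt_of_lt_of_le (by linarith) hx.1
      have := (hasDerivAt_inv hx0.ne').const_mul (-(16 * u ^ 2)⁻¹)
      exact this.congr_deriv (by ring)
    have hii : IntervalIntegrable (fun x : ℝ => ((4 * x * u) ^ 2)⁻¹) volume (y/2) y := by
      rw [intervalIntegrable_iff_integrableOn_Icc_of_le hle]; exact hint
    rw [intervalIntegral.integral_eq_sub_of_hasDerivAt hderiv hii]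
    field_simp
    ring
  have hnn : 0 ≤ᵐ[volume.restrict (Icc (y/2) y)] fun x : ℝ => ((4 * x * u) ^ 2)⁻¹ :=
    ae_of_all _ fun x => by positivity
  rw [← ofReal_integral_eq_lintegral_ofReal hint hnn]
  congr 1
  rw [integral_Icc_eq_integral_Ioc, ← intervalIntegral.integral_of_le hle, key]

lemma outer_seg {a δ : ℝ} (ha : 0 < a) (haδ : a ≤ δ) (hδe : δ ≤ Real.exp (-Real.exp 1)) :
    ∫⁻ y in Ioc a δ, ENNReal.ofReal ((16 * y * Real.log (1 / y) ^ 2)⁻¹)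
      ≤ ENNReal.ofReal ((16 * Real.log (1 / δ))⁻¹) := by
  have hδ0 : 0 < δ := lt_of_lt_of_le ha haδ
  have hLpos : ∀ t : ℝ, 0 < t → t ≤ δ → 0 < Real.log (1 / t) := fun t h1 h2 =>
    lt_of_lt_of_le (Real.exp_pos 1) (log_one_div_ge h1 h2 hδe)
  have hcont : ContinuousOn (fun y : ℝ => (16 * y * Real.log (1 / y) ^ 2)⁻¹) (Icc a δ) := by
    apply ContinuousOn.inv₀
    · apply ContinuousOn.mul (by fun_prop)
      apply ContinuousOn.pow
      apply Real.continuousOn_log.comp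
      · exact continuousOn_const.div continuousOn_id fun t ht => (lt_of_lt_of_le ha ht.1).ne'
      · intro t ht
        have h0 : 0 < t := lt_of_lt_of_le ha ht.1
        simp only [mem_compl_iff, mem_singleton_iff]
        positivity
    · intro t ht
      have ht0 : 0 < t := lt_of_lt_of_le ha ht.1
      have := hLpos t ht0 ht.2
      positivity
  have hint : IntegrableOn (fun y : ℝ => (16 * y * Real.log (1 / y) ^ 2)⁻¹) (Icc a δ) :=
    hcont.integrableOn_compact isCompact_Icc
  have hii : IntervalIntegrable (fun y : ℝ => (16 * y * Real.log (1 / y) ^ 2)⁻¹) volume a δ := by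
    rw [intervalIntegrable_iff_integrableOn_Icc_of_le haδ]; exact hint
  have key : ∫ y in a..δ, (16 * y * Real.log (1 / y) ^ 2)⁻¹
      = (16 * Real.log (1 / δ))⁻¹ - (16 * Real.log (1 / a))⁻¹ := by
    have hderiv : ∀ y ∈ Set.uIcc a δ,
        HasDerivAt (fun s : ℝ => (16 * Real.log (1 / s))⁻¹)
          ((16 * y * Real.log (1 / y) ^ 2)⁻¹) y := by
      intro y hy
      rw [Set.uIcc_of_le haδ] at hy
      have hy0 : 0 < y := lt_of_lt_of_le ha hy.1
      have hLy := hLpos y hy0 hy.2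
      have h1 : HasDerivAt (fun s : ℝ => 16 * Real.log (1 / s)) (16 * -y⁻¹) y :=
        (hasDerivAt_log_one_div hy0).const_mul 16
      have h2 := h1.inv (by positivity)
      exact h2.congr_deriv (by ring)
    rw [intervalIntegral.integral_eq_sub_of_hasDerivAt hderiv hii]
  have hnn : 0 ≤ᵐ[volume.restrict (Ioc a δ)] fun y : ℝ => (16 * y * Real.log (1 / y) ^ 2)⁻¹ := by
    filter_upwards [ae_restrict_mem measurableSet_Ioc] with y hy
    have hy0 : 0 < y := lt_trans ha hy.1
    have := hLpos y hy0 hy.2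
    positivity
  rw [← ofReal_integral_eq_lintegral_ofReal (hint.mono_set Ioc_subset_Icc_self) hnn]
  apply ENNReal.ofReal_le_ofReal
  rw [← intervalIntegral.integral_of_le haδ, key]
  have : 0 ≤ (16 * Real.log (1 / a))⁻¹ := by
    have := hLpos a ha haδ
    positivity
  linarith
lemma outer_limit {δ : ℝ} (hδ0 : 0 < δ) (hδe : δ ≤ Real.exp (-Real.exp 1)) :
    ∫⁻ y in Ioc (0:ℝ) δ, ENNReal.ofReal ((16 * y * Real.log (1 / y) ^ 2)⁻¹)
      ≤ ENNReal.ofReal ((16 * Real.log (1 / δ))⁻¹) := by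
  set g : ℝ → ℝ≥0∞ := fun y => ENNReal.ofReal ((16 * y * Real.log (1 / y) ^ 2)⁻¹) with hg
  have hgm : Measurable g := by
    apply ENNReal.measurable_ofReal.comp
    apply Measurable.inv
    apply Measurable.mul (measurable_const.mul measurable_id)
    exact (Real.measurable_log.comp (measurable_const.div measurable_id)).pow_const 2
  have hmono : Monotone (fun n : ℕ => (Ioc (δ / (n + 1)) δ).indicator g) := by
    intro m n hmn
    apply Set.indicator_le_indicator_of_subset
    · apply Ioc_subset_Ioc_left
      apply div_le_div_of_nonneg_left hδ0.le (by positivity)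
      exact_mod_cast by omega
    · exact fun _ => zero_le
  have hsup : ∀ y, (⨆ n : ℕ, (Ioc (δ / (n + 1)) δ).indicator g y)
      = (Ioc (0:ℝ) δ).indicator g y := by
    intro y
    by_cases hy : y ∈ Ioc (0:ℝ) δ
    · rw [indicator_of_mem hy]
      apply le_antisymm
      · exact iSup_le fun n => Set.indicator_le_self' (fun _ _ => zero_le) y
      · obtain ⟨n, hn⟩ := exists_nat_gt (δ / y)
        have hlt : δ / (n + 1) < y := by
          rw [div_lt_iff₀ (by positivity)]
          rw [div_lt_iff₀ hy.1] at hn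
          nlinarith [hy.1]
        have hmem : y ∈ Ioc (δ / (n + 1)) δ := ⟨hlt, hy.2⟩
        exact le_iSup_of_le n (le_of_eq (Set.indicator_of_mem hmem g).symm)
    · rw [indicator_of_notMem hy]
      have hn : ∀ n : ℕ, y ∉ Ioc (δ / (n + 1)) δ := by
        intro n hmem
        exact hy ⟨lt_trans (by positivity) hmem.1, hmem.2⟩
      simp [Set.indicator_of_notMem (hn _)]
  calc ∫⁻ y in Ioc (0:ℝ) δ, g y = ∫⁻ y, (Ioc (0:ℝ) δ).indicator g y := by
        rw [lintegral_indicator measurableSet_Ioc]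
    _ = ∫⁻ y, ⨆ n : ℕ, (Ioc (δ / (n + 1)) δ).indicator g y := by
        simp_rw [hsup]
    _ = ⨆ n : ℕ, ∫⁻ y, (Ioc (δ / (n + 1)) δ).indicator g y :=
        lintegral_iSup (fun n => hgm.indicator measurableSet_Ioc) hmono
    _ ≤ ENNReal.ofReal ((16 * Real.log (1 / δ))⁻¹) := by
        apply iSup_le
        intro n
        rw [lintegral_indicator measurableSet_Ioc]
        refine outer_seg (by positivity) ?_ hδe
        apply div_le_self hδ0.le
        have : (0:ℝ) ≤ (n:ℝ) := Nat.cast_nonneg n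
        linarith

lemma tonelli_T (δ : ℝ) (B : ℝ × ℝ → ℝ≥0∞) (hB : Measurable B) :
    ∫⁻ p in {p : ℝ × ℝ | p.2 ∈ Ioc (0:ℝ) δ ∧ p.1 ∈ Icc (p.2 / 2) p.2}, B p
      = ∫⁻ y in Ioc (0:ℝ) δ, ∫⁻ x in Icc (y / 2) y, B (x, y) := by
  set T : Set (ℝ × ℝ) := {p : ℝ × ℝ | p.2 ∈ Ioc (0:ℝ) δ ∧ p.1 ∈ Icc (p.2 / 2) p.2} with hTdef
  have hT : MeasurableSet T := by
    have h1 : MeasurableSet {p : ℝ × ℝ | 0 < p.2} := measurableSet_lt measurable_const measurable_snd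
    have h2 : MeasurableSet {p : ℝ × ℝ | p.2 ≤ δ} := measurableSet_le measurable_snd measurable_const
    have h3 : MeasurableSet {p : ℝ × ℝ | p.2 / 2 ≤ p.1} :=
      measurableSet_le (measurable_snd.div_const 2) measurable_fst
    have h4 : MeasurableSet {p : ℝ × ℝ | p.1 ≤ p.2} := measurableSet_le measurable_fst measurable_snd
    have : T = ({p : ℝ × ℝ | 0 < p.2} ∩ {p | p.2 ≤ δ}) ∩ ({p | p.2 / 2 ≤ p.1} ∩ {p | p.1 ≤ p.2}) := by
      ext p; simp [hTdef, Set.mem_Ioc, Set.mem_Icc]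
    rw [this]
    exact ((h1.inter h2).inter (h3.inter h4))
  rw [← lintegral_indicator hT, Measure.volume_eq_prod,
    lintegral_prod_symm _ (hB.indicator hT).aemeasurable]
  rw [← lintegral_indicator (measurableSet_Ioc (a := (0:ℝ)) (b := δ))]
  apply lintegral_congr
  intro y
  by_cases hy : y ∈ Ioc (0:ℝ) δ
  · rw [indicator_of_mem hy, ← lintegral_indicator measurableSet_Icc]
    apply lintegral_congr
    intro x
    by_cases hx : x ∈ Icc (y / 2) y
    · rw [Set.indicator_of_mem hx, Set.indicator_of_mem (show (x, y) ∈ T from ⟨hy, hx⟩)]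
    · rw [Set.indicator_of_notMem hx,
        Set.indicator_of_notMem (show (x, y) ∉ T from fun h => hx h.2)]
  · rw [indicator_of_notMem hy]
    have : ∀ x : ℝ, T.indicator B (x, y) = 0 := fun x =>
      Set.indicator_of_notMem (fun h => hy h.1) B
    simp [this]

/-- There is a constant `C > 0` such that for every `0 < δ ≤ e^{-e}`, the near-diagonal part of
the Gagliardo integral of `f(t) = (log(log(1/t)))^(-1/4)`, over the region
`{(x,y) : 0 < x ≤ y ≤ 2x, y ≤ δ}`, is at most `C / log(1/δ)`. -/
theorem stmt1 :
    ∃ C : ℝ, 0 < C ∧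
      ∀ δ : ℝ, 0 < δ → δ ≤ Real.exp (-Real.exp 1) →
        (∫⁻ p in {p : ℝ × ℝ | 0 < p.1 ∧ p.1 ≤ p.2 ∧ p.2 ≤ 2 * p.1 ∧ p.2 ≤ δ},
            ENNReal.ofReal ((fGag p.1 - fGag p.2) ^ 2 / (p.1 - p.2) ^ 2))
          ≤ ENNReal.ofReal (C / Real.log (1 / δ)) := by
  refine ⟨1, one_pos, fun δ hδ0 hδe => ?_⟩
  have hL : Real.exp 1 ≤ Real.log (1 / δ) := log_one_div_ge hδ0 le_rfl hδe
  have hL0 : (0:ℝ) < Real.log (1 / δ) := lt_of_lt_of_le (Real.exp_pos 1) hL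
  set B : ℝ × ℝ → ℝ≥0∞ :=
    fun p => ENNReal.ofReal (((4 * p.1 * Real.log (1 / p.2)) ^ 2)⁻¹) with hBdef
  have hB : Measurable B := by
    apply ENNReal.measurable_ofReal.comp
    apply Measurable.inv
    apply Measurable.pow_const
    exact (measurable_const.mul measurable_fst).mul
      (Real.measurable_log.comp (measurable_const.div measurable_snd))
  have step1 : (∫⁻ p in {p : ℝ × ℝ | 0 < p.1 ∧ p.1 ≤ p.2 ∧ p.2 ≤ 2 * p.1 ∧ p.2 ≤ δ},
      ENNReal.ofReal ((fGag p.1 - fGag p.2) ^ 2 / (p.1 - p.2) ^ 2))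
      ≤ ∫⁻ p in {p : ℝ × ℝ | 0 < p.1 ∧ p.1 ≤ p.2 ∧ p.2 ≤ 2 * p.1 ∧ p.2 ≤ δ}, B p := by
    apply setLIntegral_mono hB
    intro p hp
    exact ENNReal.ofReal_le_ofReal (integrand_le hδe hp.1 hp.2.1 hp.2.2.2)
  have step2 : (∫⁻ p in {p : ℝ × ℝ | 0 < p.1 ∧ p.1 ≤ p.2 ∧ p.2 ≤ 2 * p.1 ∧ p.2 ≤ δ}, B p)
      ≤ ∫⁻ p in {p : ℝ × ℝ | p.2 ∈ Ioc (0:ℝ) δ ∧ p.1 ∈ Icc (p.2 / 2) p.2}, B p := by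
    apply lintegral_mono_set
    intro p hp
    refine ⟨⟨lt_of_lt_of_le hp.1 hp.2.1, hp.2.2.2⟩, ⟨by linarith [hp.2.2.1], hp.2.1⟩⟩
  have step3 := tonelli_T δ B hB
  have step4 : (∫⁻ y in Ioc (0:ℝ) δ, ∫⁻ x in Icc (y / 2) y, B (x, y))
      = ∫⁻ y in Ioc (0:ℝ) δ, ENNReal.ofReal ((16 * y * Real.log (1 / y) ^ 2)⁻¹) := by
    apply setLIntegral_congr_fun measurableSet_Ioc
    intro y hy
    have hLy : (0:ℝ) < Real.log (1 / y) :=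
      lt_of_lt_of_le (Real.exp_pos 1) (log_one_div_ge hy.1 hy.2 hδe)
    exact inner_int hy.1 hLy
  have step5 := outer_limit hδ0 hδe
  have step6 : ENNReal.ofReal ((16 * Real.log (1 / δ))⁻¹)
      ≤ ENNReal.ofReal (1 / Real.log (1 / δ)) := by
    apply ENNReal.ofReal_le_ofReal
    rw [one_div (Real.log (1 / δ))]
    exact inv_anti₀ hL0 (by linarith)
  calc (∫⁻ p in {p : ℝ × ℝ | 0 < p.1 ∧ p.1 ≤ p.2 ∧ p.2 ≤ 2 * p.1 ∧ p.2 ≤ δ},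
        ENNReal.ofReal ((fGag p.1 - fGag p.2) ^ 2 / (p.1 - p.2) ^ 2))
      ≤ ∫⁻ p in {p : ℝ × ℝ | p.2 ∈ Ioc (0:ℝ) δ ∧ p.1 ∈ Icc (p.2 / 2) p.2}, B p :=
        step1.trans step2
    _ = ∫⁻ y in Ioc (0:ℝ) δ, ENNReal.ofReal ((16 * y * Real.log (1 / y) ^ 2)⁻¹) :=
        step3.trans step4
    _ ≤ ENNReal.ofReal ((16 * Real.log (1 / δ))⁻¹) := step5
    _ ≤ ENNReal.ofReal (1 / Real.log (1 / δ)) := step6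
end
end

section
/- There exists a constant C > 0 such that for every L ≥ e, the iterated integral ∫_{log 2}^{∞} ∫_{−∞}^{−L−w} e^{−w} · ((log(−u − w))^{−1/4} − (log(−u))^{−1/4})² du dw is finite and at most C / L. -/
open MeasureTheory Set
open scoped ENNReal

private lemma ptwise {L w u : ℝ} (hL : Real.exp 1 ≤ L) (hw : 0 < w) (hu : u < -L - w) :
    (Real.log (-u - w) ^ (-(1 / 4 : ℝ)) - Real.log (-u) ^ (-(1 / 4 : ℝ))) ^ 2
      ≤ w ^ 2 * ((-u - w) ^ 2)⁻¹ := by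
  have hyL : L < -u - w := by linarith
  have hey : Real.exp 1 ≤ -u - w := le_trans hL hyL.le
  have hy0 : (0:ℝ) < -u - w := lt_of_lt_of_le (Real.exp_pos 1) hey
  have hx : -u - w < -u := by linarith
  have hx0 : (0:ℝ) < -u := lt_trans hy0 hx
  set y : ℝ := -u - w with hy
  set A : ℝ := Real.log y with hA
  set B : ℝ := Real.log (-u) with hB
  have hA1 : 1 ≤ A := by
    have := Real.log_le_log (Real.exp_pos 1) hey
    rwa [Real.log_exp] at this
  have hAB : A ≤ B := Real.log_le_log hy0 hx.le
  have hB1 : 1 ≤ B := hA1.trans hAB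
  have hA0 : (0:ℝ) < A := lt_of_lt_of_le one_pos hA1
  have hB0 : (0:ℝ) < B := lt_of_lt_of_le one_pos hB1
  have hdiff : B - A ≤ w / y := by
    have h1 : B - A = Real.log (-u / y) := (Real.log_div hx0.ne' hy0.ne').symm
    have h2 : -u / y = 1 + w / y := by field_simp; ring
    rw [h1]
    have := Real.log_le_sub_one_of_pos (show (0:ℝ) < -u / y by positivity)
    rw [h2] at this ⊢
    linarith
  set a : ℝ := A ^ (-(1 / 4 : ℝ)) with ha
  set b : ℝ := B ^ (-(1 / 4 : ℝ)) with hb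
  have ha0 : 0 < a := Real.rpow_pos_of_pos hA0 _
  have hb0 : 0 < b := Real.rpow_pos_of_pos hB0 _
  have ha4 : a ^ 4 = A⁻¹ := by
    rw [ha, ← Real.rpow_natCast (A ^ (-(1/4:ℝ))) 4, ← Real.rpow_mul hA0.le]
    norm_num [Real.rpow_neg_one]
  have hb4 : b ^ 4 = B⁻¹ := by
    rw [hb, ← Real.rpow_natCast (B ^ (-(1/4:ℝ))) 4, ← Real.rpow_mul hB0.le]
    norm_num [Real.rpow_neg_one]
  have hba : b ≤ a := by
    have h4 : b ^ 4 ≤ a ^ 4 := by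
      rw [ha4, hb4]
      exact inv_anti₀ hA0 hAB
    exact le_of_pow_le_pow_left₀ (by norm_num) ha0.le h4
  have ha1 : a ≤ 1 := Real.rpow_le_one_of_one_le_of_nonpos hA1 (by norm_num)
  have ha8 : a ^ 8 = (A * A)⁻¹ := by
    have h : a ^ 8 = (a ^ 4) ^ 2 := by ring
    rw [h, ha4, sq, mul_inv]
  have h2 : a ^ 4 - b ^ 4 ≤ (w / y) * a ^ 8 := by
    rw [ha4, hb4, ha8]
    have key1 : A⁻¹ - B⁻¹ = (B - A) / (A * B) := by field_simp
    rw [key1]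
    calc (B - A) / (A * B) ≤ (B - A) / (A * A) := by
          apply div_le_div_of_nonneg_left (by linarith) (by positivity)
          exact mul_le_mul_of_nonneg_left hAB hA0.le
      _ = (B - A) * (A * A)⁻¹ := div_eq_mul_inv _ _
      _ ≤ (w / y) * (A * A)⁻¹ := by
          apply mul_le_mul_of_nonneg_right hdiff (by positivity)
  have h3 : (a - b) * a ^ 3 ≤ a ^ 4 - b ^ 4 := by
    nlinarith [mul_nonneg (sub_nonneg.2 hba)
      (show (0:ℝ) ≤ a ^ 2 * b + a * b ^ 2 + b ^ 3 by positivity)]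
  have h5 : a - b ≤ w / y := by
    have h4 : (a - b) * a ^ 3 ≤ ((w / y) * a ^ 5) * a ^ 3 := by
      have : ((w / y) * a ^ 5) * a ^ 3 = (w / y) * a ^ 8 := by ring
      rw [this]; exact h3.trans h2
    have h6 : a - b ≤ (w / y) * a ^ 5 := le_of_mul_le_mul_right h4 (by positivity)
    have h7 : (w / y) * a ^ 5 ≤ (w / y) * 1 := by
      apply mul_le_mul_of_nonneg_left _ (by positivity)
      exact pow_le_one₀ ha0.le ha1
    linarith
  have hfin : (a - b) ^ 2 ≤ (w / y) ^ 2 :=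
    pow_le_pow_left₀ (sub_nonneg.2 hba) h5 2
  calc (a - b) ^ 2 ≤ (w / y) ^ 2 := hfin
    _ = w ^ 2 * (y ^ 2)⁻¹ := by rw [div_pow, div_eq_mul_inv]

private lemma inner_sub {L w : ℝ} (hL0 : 0 < L) :
    ∫⁻ u in Iio (-L - w), ENNReal.ofReal (((-u - w) ^ 2)⁻¹) = ENNReal.ofReal L⁻¹ := by
  have h1 : MeasurePreserving (fun u : ℝ => -w - u) volume volume :=
    Measure.measurePreserving_sub_left volume (-w)
  have hemb : MeasurableEmbedding (fun u : ℝ => -w - u) :=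
    (MeasurableEquiv.subLeft (-w)).measurableEmbedding
  have hpre : (fun u : ℝ => -w - u) ⁻¹' (Ioi L) = Iio (-L - w) := by
    ext u
    simp only [mem_preimage, mem_Ioi, mem_Iio]
    constructor <;> intro h <;> linarith
  calc ∫⁻ u in Iio (-L - w), ENNReal.ofReal (((-u - w) ^ 2)⁻¹)
      = ∫⁻ u in (fun u : ℝ => -w - u) ⁻¹' (Ioi L),
          (fun y : ℝ => ENNReal.ofReal ((y ^ 2)⁻¹)) ((fun u : ℝ => -w - u) u) := by
        rw [hpre]
        apply lintegral_congr
        intro u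
        have : (-w - u) = -u - w := by ring
        simp [this]
    _ = ∫⁻ y in Ioi L, ENNReal.ofReal ((y ^ 2)⁻¹) := by
        simpa using h1.setLIntegral_comp_preimage_emb hemb
          (fun y : ℝ => ENNReal.ofReal ((y ^ 2)⁻¹)) (Ioi L)
    _ = ∫⁻ y in Ioi L, ENNReal.ofReal (y ^ (-2 : ℝ)) := by
        apply setLIntegral_congr_fun measurableSet_Ioi
        intro y hy
        dsimp only
        have hy0 : (0:ℝ) < y := hL0.trans hy
        rw [Real.rpow_neg hy0.le, Real.rpow_two]
    _ = ENNReal.ofReal (∫ y in Ioi L, y ^ (-2 : ℝ)) := by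
        rw [ofReal_integral_eq_lintegral_ofReal
          (integrableOn_Ioi_rpow_of_lt (by norm_num) hL0)]
        filter_upwards [ae_restrict_mem measurableSet_Ioi] with y hy
        exact Real.rpow_nonneg (hL0.trans hy).le _
    _ = ENNReal.ofReal L⁻¹ := by
        rw [integral_Ioi_rpow_of_lt (by norm_num) hL0]
        norm_num [Real.rpow_neg_one]

/-- There is a constant `C > 0` such that for every `L ≥ e`, the iterated integral
`∫_{log 2}^∞ ∫_{-∞}^{-L-w} e^{-w} ((log(-u-w))^{-1/4} - (log(-u))^{-1/4})² du dw`
is (finite and) at most `C / L`. -/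
theorem stmt6 :
    ∃ C : ℝ, 0 < C ∧
      ∀ L : ℝ, Real.exp 1 ≤ L →
        (∫⁻ w in Ioi (Real.log 2),
            ∫⁻ u in Iio (-L - w),
              ENNReal.ofReal (Real.exp (-w) *
                (Real.log (-u - w) ^ (-(1 / 4 : ℝ)) - Real.log (-u) ^ (-(1 / 4 : ℝ))) ^ 2))
          ≤ ENNReal.ofReal (C / L) := by
  refine ⟨2, two_pos, fun L hL => ?_⟩
  have hL0 : 0 < L := lt_of_lt_of_le (Real.exp_pos 1) hL
  have hlog2 : 0 < Real.log 2 := Real.log_pos one_lt_two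
  have inner_bound : ∀ w ∈ Ioi (Real.log 2),
      (∫⁻ u in Iio (-L - w),
          ENNReal.ofReal (Real.exp (-w) *
            (Real.log (-u - w) ^ (-(1 / 4 : ℝ)) - Real.log (-u) ^ (-(1 / 4 : ℝ))) ^ 2))
        ≤ ENNReal.ofReal (L⁻¹ * (Real.exp (-w) * w ^ 2)) := by
    intro w hw
    have hw0 : 0 < w := hlog2.trans hw
    calc (∫⁻ u in Iio (-L - w),
            ENNReal.ofReal (Real.exp (-w) *
              (Real.log (-u - w) ^ (-(1 / 4 : ℝ)) - Real.log (-u) ^ (-(1 / 4 : ℝ))) ^ 2))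
        ≤ ∫⁻ u in Iio (-L - w),
            ENNReal.ofReal (Real.exp (-w) * w ^ 2 * ((-u - w) ^ 2)⁻¹) := by
          apply lintegral_mono_ae
          rw [ae_restrict_iff' measurableSet_Iio]
          filter_upwards with u hu
          apply ENNReal.ofReal_le_ofReal
          have hp := ptwise hL hw0 hu
          calc Real.exp (-w) *
                (Real.log (-u - w) ^ (-(1 / 4 : ℝ)) - Real.log (-u) ^ (-(1 / 4 : ℝ))) ^ 2
              ≤ Real.exp (-w) * (w ^ 2 * ((-u - w) ^ 2)⁻¹) :=
                mul_le_mul_of_nonneg_left hp (Real.exp_nonneg _)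
            _ = Real.exp (-w) * w ^ 2 * ((-u - w) ^ 2)⁻¹ := by ring
      _ = ENNReal.ofReal (Real.exp (-w) * w ^ 2) *
            ∫⁻ u in Iio (-L - w), ENNReal.ofReal (((-u - w) ^ 2)⁻¹) := by
          simp_rw [ENNReal.ofReal_mul (show (0:ℝ) ≤ Real.exp (-w) * w ^ 2 by positivity)]
          exact lintegral_const_mul' _ _ ENNReal.ofReal_ne_top
      _ = ENNReal.ofReal (Real.exp (-w) * w ^ 2) * ENNReal.ofReal L⁻¹ := by
          rw [inner_sub hL0]
      _ = ENNReal.ofReal (L⁻¹ * (Real.exp (-w) * w ^ 2)) := by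
          rw [← ENNReal.ofReal_mul (by positivity), mul_comm]
  calc (∫⁻ w in Ioi (Real.log 2),
          ∫⁻ u in Iio (-L - w),
            ENNReal.ofReal (Real.exp (-w) *
              (Real.log (-u - w) ^ (-(1 / 4 : ℝ)) - Real.log (-u) ^ (-(1 / 4 : ℝ))) ^ 2))
      ≤ ∫⁻ w in Ioi (Real.log 2), ENNReal.ofReal (L⁻¹ * (Real.exp (-w) * w ^ 2)) := by
        apply lintegral_mono_ae
        rw [ae_restrict_iff' measurableSet_Ioi]
        filter_upwards with w hw
        exact inner_bound w hw
    _ = ENNReal.ofReal L⁻¹ *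
          ∫⁻ w in Ioi (Real.log 2), ENNReal.ofReal (Real.exp (-w) * w ^ 2) := by
        simp_rw [ENNReal.ofReal_mul (show (0:ℝ) ≤ L⁻¹ by positivity)]
        exact lintegral_const_mul' _ _ ENNReal.ofReal_ne_top
    _ ≤ ENNReal.ofReal L⁻¹ *
          ∫⁻ w in Ioi (0:ℝ), ENNReal.ofReal (Real.exp (-w) * w ^ 2) :=
        mul_le_mul_right (lintegral_mono_set (Ioi_subset_Ioi hlog2.le)) _
    _ = ENNReal.ofReal L⁻¹ * ENNReal.ofReal 2 := by
        congr 1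
        have h3 : (0:ℝ) < 3 := by norm_num
        calc (∫⁻ w in Ioi (0:ℝ), ENNReal.ofReal (Real.exp (-w) * w ^ 2))
            = ∫⁻ w in Ioi (0:ℝ), ENNReal.ofReal (Real.exp (-w) * w ^ ((3:ℝ) - 1)) := by
              apply setLIntegral_congr_fun measurableSet_Ioi
              intro w hw
              dsimp only
              rw [show (3:ℝ) - 1 = 2 by norm_num, Real.rpow_two]
          _ = ENNReal.ofReal (∫ w in Ioi (0:ℝ), Real.exp (-w) * w ^ ((3:ℝ) - 1)) := by
              rw [ofReal_integral_eq_lintegral_ofReal (Real.GammaIntegral_convergent h3)]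
              filter_upwards [ae_restrict_mem measurableSet_Ioi] with w hw
              exact mul_nonneg (Real.exp_nonneg _) (Real.rpow_nonneg (le_of_lt hw) _)
          _ = ENNReal.ofReal (Real.Gamma 3) := by rw [← Real.Gamma_eq_integral h3]
          _ = ENNReal.ofReal 2 := by
              congr 1
              rw [show (3:ℝ) = ((2:ℕ):ℝ) + 1 by norm_num, Real.Gamma_nat_eq_factorial]
              norm_num [Nat.factorial]
    _ = ENNReal.ofReal (2 / L) := by
        rw [← ENNReal.ofReal_mul (by positivity)]
        congr 1
        rw [div_eq_mul_inv, mul_comm]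
end
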